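/- For every prime p and every positive integer D, there exists n_0 such that for all n ≥ n_0 there is a p-ary function f : U_p^n → U_p with deg(f) > D and s(f) = √((p-1)·deg(f)). -/

import Mathlib

open scoped Classical

noncomputable section

/-- The primitive `m`-th root of unity `ε = e^{2πi/m}`. -/
def primRoot (m : ℕ) : ℂ := Complex.exp (2 * Real.pi * Complex.I / m)

/-- The bijection `k ↦ ε^k` from `ZMod m` onto the set `U_m` of `m`-th roots of unity;
vectors of `U_m^n` are modelled by their exponent vectors in `(ZMod m)^n`. -/
def uRoot (m : ℕ) (k : ZMod m) : ℂ := primRoot m ^ k.val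

/-- `F` represents the `m`-ary function `U_m^n → U_m` given in exponents by `g`,
i.e. the function `(ε^{x 1}, …, ε^{x n}) ↦ ε^{g x}`. -/
def RepresentsU (m n : ℕ) (F : MvPolynomial (Fin n) ℂ)
    (g : (Fin n → ZMod m) → ZMod m) : Prop :=
  ∀ x : Fin n → ZMod m, MvPolynomial.eval (fun i => uRoot m (x i)) F = uRoot m (g x)

/-- Degree of the `m`-ary function `U_m^n → U_m` given in exponents by `g`. -/
def degU (m n : ℕ) (g : (Fin n → ZMod m) → ZMod m) : ℕ :=
  sInf {d | ∃ F : MvPolynomial (Fin n) ℂ, RepresentsU m n F g ∧ F.totalDegree = d}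

/-- Local sensitivity of the `m`-ary function `U_m^n → U_m` given in exponents by `g`. -/
def localSensU (m n : ℕ) [NeZero m] (g : (Fin n → ZMod m) → ZMod m)
    (x : Fin n → ZMod m) : ℕ :=
  (Finset.univ.filter fun y : Fin n → ZMod m => hammingDist x y = 1 ∧ g y ≠ g x).card

/-- Sensitivity of the `m`-ary function `U_m^n → U_m` given in exponents by `g`. -/
def sensU (m n : ℕ) [NeZero m] (g : (Fin n → ZMod m) → ZMod m) : ℕ :=
  Finset.univ.sup (localSensU m n g)

/-!
The witness is an AND of `k` ORs on disjoint blocks of `b` variables: it takes the value `ε`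
when every block contains a coordinate different from `1`, and `1` otherwise.

Its degree is `k b (p - 1)`. The upper bound is an explicit polynomial built from the indicators
`p⁻¹ ∑_{t < p} x_i^t` of `x_i = 1`. For the lower bound, expanding the AND by
inclusion–exclusion shows that the correlation of the function with the character `∏ x_i` over
all block variables is `(ε - 1) (-1)^k p^(n - kb) ≠ 0`, while a monomial `x^d` has nonzero
correlation with that character only if `d_i ≡ -1 (mod p)` on every block variable.

An input where all blocks are nonzero is sensitive only where a block has a single nonzero entry
(at most `k` neighbours); otherwise it is sensitive only inside one entirely zero block (at most
`b (p - 1)` neighbours); one nonzero entry per block gives `k`. With `b = D + 1` and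
`k = b (p - 1)²` we get `s = k` and `(p - 1) · deg = k²`.
-/

open Finset Function

lemma geom_sum_eq_ite_of_pow_eq_one {K : Type*} [Field K] {ζ : K} {p : ℕ} (h : ζ ^ p = 1) :
    ∑ s ∈ range p, ζ ^ s = if ζ = 1 then (p : K) else 0 := by
  split_ifs with hζ
  · simp [hζ]
  · rw [geom_sum_eq hζ, h, sub_self, zero_div]

lemma sum_zmod_val {M : Type*} [AddCommMonoid M] (p : ℕ) [NeZero p] (f : ℕ → M) :
    ∑ a : ZMod p, f a.val = ∑ s ∈ range p, f s := by
  obtain ⟨m, rfl⟩ := Nat.exists_eq_add_one_of_ne_zero (NeZero.ne p)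
  exact Fin.sum_univ_eq_sum_range f (m + 1)

section RootsOfUnity

variable {p : ℕ}

@[simp]
lemma uRoot_zero : uRoot p 0 = 1 := by
  simp [uRoot]

lemma uRoot_one (hp : 1 < p) : uRoot p 1 = primRoot p := by
  have : Fact (1 < p) := ⟨hp⟩
  rw [uRoot, ZMod.val_one, pow_one]

variable [NeZero p]

lemma isPrimitiveRoot_primRoot : IsPrimitiveRoot (primRoot p) p := by
  simpa [primRoot] using Complex.isPrimitiveRoot_exp p (NeZero.ne p)

lemma uRoot_pow_eq_one (a : ZMod p) : uRoot p a ^ p = 1 := by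
  rw [uRoot, ← pow_mul, mul_comm, pow_mul, isPrimitiveRoot_primRoot.pow_eq_one, one_pow]

lemma uRoot_eq_one_iff (a : ZMod p) : uRoot p a = 1 ↔ a = 0 := by
  rw [uRoot, isPrimitiveRoot_primRoot.pow_eq_one_iff_dvd, ← ZMod.natCast_eq_zero_iff,
    ZMod.natCast_zmod_val]

lemma sum_uRoot_pow (t : ℕ) :
    ∑ a : ZMod p, uRoot p a ^ t = if p ∣ t then (p : ℂ) else 0 := by
  simp_rw [uRoot, ← pow_mul, mul_comm _ t, pow_mul]
  rw [sum_zmod_val p ((primRoot p ^ t) ^ ·), geom_sum_eq_ite_of_pow_eq_one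
    (by rw [← pow_mul, mul_comm, pow_mul, isPrimitiveRoot_primRoot.pow_eq_one, one_pow])]
  exact if_congr (isPrimitiveRoot_primRoot.pow_eq_one_iff_dvd t) rfl rfl

lemma sum_range_uRoot_pow (a : ZMod p) :
    ∑ t ∈ range p, uRoot p a ^ t = if a = 0 then (p : ℂ) else 0 := by
  rw [geom_sum_eq_ite_of_pow_eq_one (uRoot_pow_eq_one a)]
  exact if_congr (uRoot_eq_one_iff a) rfl rfl

end RootsOfUnity

section Degree

variable {p : ℕ} [NeZero p]

lemma sum_prod_uRoot_pow {ι : Type*} [Fintype ι] [DecidableEq ι] (e : ι → ℕ) :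
    ∑ x : ι → ZMod p, ∏ i, uRoot p (x i) ^ e i =
      ∏ i, if p ∣ e i then (p : ℂ) else 0 := by
  rw [← Fintype.prod_sum (fun i a => uRoot p a ^ e i)]
  exact prod_congr rfl fun i _ => sum_uRoot_pow (e i)

lemma prod_mem_eq_prod_pow_ite {ι M : Type*} [Fintype ι] [DecidableEq ι] [CommMonoid M]
    (A : Finset ι) (f : ι → M) :
    ∏ i ∈ A, f i = ∏ i, f i ^ (if i ∈ A then 1 else 0) := by
  simp_rw [pow_ite, pow_one, pow_zero, Fintype.prod_ite_mem]

lemma sum_eval_mul_prod_uRoot {n : ℕ} (F : MvPolynomial (Fin n) ℂ) (A : Finset (Fin n)) :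
    ∑ x : Fin n → ZMod p,
        MvPolynomial.eval (fun i => uRoot p (x i)) F * ∏ i ∈ A, uRoot p (x i) =
      ∑ d ∈ F.support, F.coeff d *
        ∏ i, if p ∣ d i + (if i ∈ A then 1 else 0) then (p : ℂ) else 0 := by
  simp_rw [MvPolynomial.eval_eq', sum_mul, mul_assoc]
  rw [sum_comm]
  refine sum_congr rfl fun d _ => ?_
  rw [← mul_sum, ← sum_prod_uRoot_pow]
  congr 1
  refine sum_congr rfl fun x _ => ?_
  rw [prod_mem_eq_prod_pow_ite A, ← prod_mul_distrib]
  simp_rw [pow_add]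

theorem card_mul_le_totalDegree {n : ℕ} {g : (Fin n → ZMod p) → ZMod p}
    {F : MvPolynomial (Fin n) ℂ} (hF : RepresentsU p n F g) {A : Finset (Fin n)}
    (hA : ∑ x, uRoot p (g x) * ∏ i ∈ A, uRoot p (x i) ≠ 0) :
    #A * (p - 1) ≤ F.totalDegree := by
  simp_rw [(hF _).symm, sum_eval_mul_prod_uRoot] at hA
  obtain ⟨d, hd, hne⟩ := exists_ne_zero_of_sum_ne_zero hA
  have hdA : ∀ i ∈ A, p - 1 ≤ d i := fun i hi => by
    have := prod_ne_zero_iff.1 (right_ne_zero_of_mul hne) i (mem_univ i)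
    rw [if_pos hi] at this
    have hdvd : p ∣ d i + 1 := by_contra fun h => this (if_neg h)
    have := Nat.le_of_dvd (Nat.succ_pos _) hdvd
    omega
  calc #A * (p - 1) = ∑ i ∈ A, (p - 1) := by rw [sum_const, smul_eq_mul]
    _ ≤ ∑ i ∈ A, d i := sum_le_sum hdA
    _ ≤ ∑ i, d i := sum_le_sum_of_subset (subset_univ A)
    _ = d.sum fun _ e => e := (Finsupp.sum_fintype d (fun _ e => e) fun _ => rfl).symm
    _ ≤ F.totalDegree := MvPolynomial.le_totalDegree hd

end Degree

section AndOfOrs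

open MvPolynomial

variable {p n : ℕ} {κ : Type*} (B : κ → Finset (Fin n))

def AllBlocksNonzero (x : Fin n → ZMod p) : Prop :=
  ∀ j, ∃ i ∈ B j, x i ≠ 0

variable (p) in
def andOfOrs (x : Fin n → ZMod p) : ZMod p :=
  if AllBlocksNonzero B x then 1 else 0

lemma andOfOrs_of_allBlocksNonzero {x : Fin n → ZMod p} (hx : AllBlocksNonzero B x) :
    andOfOrs p B x = 1 :=
  if_pos hx

lemma andOfOrs_of_not_allBlocksNonzero {x : Fin n → ZMod p} (hx : ¬AllBlocksNonzero B x) :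
    andOfOrs p B x = 0 :=
  if_neg hx

variable (p) in
def zeroIndicatorPoly (i : Fin n) : MvPolynomial (Fin n) ℂ :=
  (p : ℂ)⁻¹ • ∑ t ∈ range p, X i ^ t

variable [Fintype κ]

variable (p) in
def andOfOrsPoly : MvPolynomial (Fin n) ℂ :=
  1 + (primRoot p - 1) • ∏ j, (1 - ∏ i ∈ B j, zeroIndicatorPoly p i)

lemma uRoot_andOfOrs (hp : 1 < p) (x : Fin n → ZMod p) :
    uRoot p (andOfOrs p B x) =
      1 + (primRoot p - 1) * ∏ j, (1 - ∏ i ∈ B j, if x i = 0 then (1 : ℂ) else 0) := by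
  by_cases hx : AllBlocksNonzero B x
  · have hblock : ∀ j, ∏ i ∈ B j, (if x i = 0 then (1 : ℂ) else 0) = 0 := fun j => by
      obtain ⟨i, hi, hxi⟩ := hx j
      exact prod_eq_zero hi (if_neg hxi)
    simp [andOfOrs, hx, hblock, uRoot_one hp]
  · obtain ⟨j, hj⟩ : ∃ j, ∀ i ∈ B j, x i = 0 := by simpa [AllBlocksNonzero] using hx
    have hblock : ∏ i ∈ B j, (if x i = 0 then (1 : ℂ) else 0) = 1 :=
      prod_eq_one fun i hi => if_pos (hj i hi)
    rw [andOfOrs, if_neg hx, uRoot_zero,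
      prod_eq_zero (mem_univ j) (by rw [hblock, sub_self]), mul_zero, add_zero]

lemma eval_zeroIndicatorPoly [NeZero p] (x : Fin n → ZMod p) (i : Fin n) :
    eval (fun i => uRoot p (x i)) (zeroIndicatorPoly p i) = if x i = 0 then 1 else 0 := by
  simp only [zeroIndicatorPoly, smul_eval, map_sum, map_pow, eval_X, sum_range_uRoot_pow]
  split_ifs <;> simp [NeZero.ne p]

lemma totalDegree_zeroIndicatorPoly_le (i : Fin n) :
    (zeroIndicatorPoly p i).totalDegree ≤ p - 1 := by
  refine (totalDegree_smul_le _ _).trans (totalDegree_finsetSum_le fun t ht => ?_)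
  have := mem_range.1 ht
  rw [totalDegree_X_pow]
  omega

lemma representsU_andOfOrsPoly [NeZero p] (hp : 1 < p) :
    RepresentsU p n (andOfOrsPoly p B) (andOfOrs p B) := by
  intro x
  simp only [andOfOrsPoly, map_add, map_one, smul_eval, map_prod, map_sub,
    eval_zeroIndicatorPoly, uRoot_andOfOrs B hp]

lemma totalDegree_andOfOrsPoly_le :
    (andOfOrsPoly p B).totalDegree ≤ (∑ j, #(B j)) * (p - 1) := by
  have hblock (j : κ) :
      (1 - ∏ i ∈ B j, zeroIndicatorPoly p i).totalDegree ≤ #(B j) * (p - 1) :=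
    calc _ ≤ max (1 : MvPolynomial (Fin n) ℂ).totalDegree
          (∏ i ∈ B j, zeroIndicatorPoly p i).totalDegree := totalDegree_sub _ _
      _ ≤ ∑ i ∈ B j, (zeroIndicatorPoly p i).totalDegree := by
          rw [totalDegree_one, zero_max]
          exact totalDegree_finsetProd _ _
      _ ≤ ∑ i ∈ B j, (p - 1) := sum_le_sum fun i _ => totalDegree_zeroIndicatorPoly_le i
      _ = #(B j) * (p - 1) := by rw [sum_const, smul_eq_mul]
  calc (andOfOrsPoly p B).totalDegree
      ≤ max (1 : MvPolynomial (Fin n) ℂ).totalDegree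
          (∏ j, (1 - ∏ i ∈ B j, zeroIndicatorPoly p i)).totalDegree :=
        (totalDegree_add _ _).trans (max_le_max le_rfl (totalDegree_smul_le _ _))
    _ ≤ ∑ j, (1 - ∏ i ∈ B j, zeroIndicatorPoly p i).totalDegree := by
        rw [totalDegree_one, zero_max]
        exact totalDegree_finsetProd _ _
    _ ≤ ∑ j, #(B j) * (p - 1) := sum_le_sum fun j _ => hblock j
    _ = (∑ j, #(B j)) * (p - 1) := (sum_mul _ _ _).symm

end AndOfOrs

section DisjointBlocks

variable {ι κ : Type*} [DecidableEq ι] [Fintype κ] (B : κ → Finset ι)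

lemma prod_one_sub_prod_eq_sum {R : Type*} [CommRing R] (hdisj : Pairwise (Disjoint on B))
    (f : ι → R) :
    ∏ j, (1 - ∏ i ∈ B j, f i) =
      ∑ T : Finset κ, (-1) ^ #T * ∏ i ∈ T.biUnion B, f i := by
  simp_rw [sub_eq_neg_add, Fintype.prod_add, prod_const_one, mul_one, prod_neg]
  exact sum_congr rfl fun T _ => by rw [prod_biUnion (hdisj.set_pairwise _)]

lemma biUnion_subset_biUnion_iff (hdisj : Pairwise (Disjoint on B))
    (hne : ∀ j, (B j).Nonempty) (T : Finset κ) :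
    univ.biUnion B ⊆ T.biUnion B ↔ T = univ := by
  refine ⟨fun h => eq_univ_of_forall fun j => ?_, fun h => h ▸ subset_rfl⟩
  obtain ⟨i, hi⟩ := hne j
  obtain ⟨j', hj'T, hij'⟩ := mem_biUnion.1 (h (mem_biUnion.2 ⟨j, mem_univ j, hi⟩))
  by_contra hjT
  exact disjoint_left.1 (hdisj fun hjj' : j = j' => hjT (hjj' ▸ hj'T)) hi hij'

end DisjointBlocks

section Fourier

variable {p : ℕ} [NeZero p]

lemma sum_prod_indicator_mul_prod_uRoot (hp : 1 < p) {ι : Type*} [Fintype ι] [DecidableEq ι]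
    (U A : Finset ι) :
    ∑ x : ι → ZMod p,
        (∏ i ∈ U, if x i = 0 then (1 : ℂ) else 0) * ∏ i ∈ A, uRoot p (x i) =
      if A ⊆ U then (p : ℂ) ^ #Uᶜ else 0 := by
  have hcoord (i : ι) :
      ∑ a : ZMod p, (if i ∈ U then (if a = 0 then (1 : ℂ) else 0) else 1) *
          (if i ∈ A then uRoot p a else 1) =
        if i ∈ U then 1 else if i ∈ A then 0 else (p : ℂ) := by
    by_cases hiU : i ∈ U
    · simp [hiU]
    · by_cases hiA : i ∈ A
      · have := sum_uRoot_pow (p := p) 1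
        simp only [pow_one, Nat.dvd_one, hp.ne', if_false] at this
        simp [hiU, hiA, this]
      · simp [hiU, hiA]
  simp_rw [← Fintype.prod_ite_mem U, ← Fintype.prod_ite_mem A, ← prod_mul_distrib]
  rw [← Fintype.prod_sum fun i a =>
    (if i ∈ U then (if a = 0 then (1 : ℂ) else 0) else 1) * (if i ∈ A then uRoot p a else 1)]
  simp_rw [hcoord]
  split_ifs with hAU
  · rw [prod_ite, prod_const_one, one_mul, ← compl_filter, filter_univ_mem, ← prod_const]
    exact prod_congr rfl fun i hi => if_neg fun hiA => mem_compl.1 hi (hAU hiA)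
  · obtain ⟨i, hiA, hiU⟩ := not_subset.1 hAU
    exact prod_eq_zero (mem_univ i) (by simp [hiU, hiA])

variable {n : ℕ} {κ : Type*} [Fintype κ] (B : κ → Finset (Fin n))

theorem sum_uRoot_andOfOrs_mul_prod (hp : 1 < p) [Nonempty κ]
    (hdisj : Pairwise (Disjoint on B)) (hne : ∀ j, (B j).Nonempty) :
    ∑ x, uRoot p (andOfOrs p B x) * ∏ i ∈ univ.biUnion B, uRoot p (x i) =
      (primRoot p - 1) * ((-1) ^ Fintype.card κ * (p : ℂ) ^ #(univ.biUnion B)ᶜ) := by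
  have hnonempty : (univ.biUnion B).Nonempty :=
    (hne (Classical.arbitrary κ)).mono (subset_biUnion_of_mem B (mem_univ _))
  have hconst : ∑ x : Fin n → ZMod p, ∏ i ∈ univ.biUnion B, uRoot p (x i) = 0 := by
    simpa [hnonempty.ne_empty] using sum_prod_indicator_mul_prod_uRoot hp ∅ (univ.biUnion B)
  simp_rw [uRoot_andOfOrs B hp, prod_one_sub_prod_eq_sum B hdisj, add_mul, one_mul,
    sum_add_distrib, hconst, zero_add, mul_assoc, sum_mul, mul_assoc, ← mul_sum]
  rw [sum_comm]
  simp_rw [← mul_sum, sum_prod_indicator_mul_prod_uRoot hp,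
    biUnion_subset_biUnion_iff B hdisj hne, mul_ite, mul_zero, sum_ite_eq', if_pos (mem_univ _),
    card_univ]

theorem degU_andOfOrs (hp : 1 < p) [Nonempty κ] (hdisj : Pairwise (Disjoint on B))
    (hne : ∀ j, (B j).Nonempty) :
    degU p n (andOfOrs p B) = (∑ j, #(B j)) * (p - 1) := by
  have hmem : (andOfOrsPoly p B).totalDegree ∈
      {d | ∃ F, RepresentsU p n F (andOfOrs p B) ∧ F.totalDegree = d} :=
    ⟨_, representsU_andOfOrsPoly B hp, rfl⟩
  refine le_antisymm ((Nat.sInf_le hmem).trans (totalDegree_andOfOrsPoly_le B))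
    (le_csInf ⟨_, hmem⟩ ?_)
  rintro d ⟨F, hF, rfl⟩
  rw [← card_biUnion (hdisj.set_pairwise _)]
  refine card_mul_le_totalDegree hF ?_
  rw [sum_uRoot_andOfOrs_mul_prod B hp hdisj hne]
  exact mul_ne_zero (sub_ne_zero.2 (isPrimitiveRoot_primRoot.ne_one hp))
    (mul_ne_zero (pow_ne_zero _ (neg_ne_zero.2 one_ne_zero))
      (pow_ne_zero _ (Nat.cast_ne_zero.2 (NeZero.ne p))))

end Fourier

section Hamming

variable {ι : Type*} [Fintype ι] [DecidableEq ι] {β : ι → Type*} [∀ i, DecidableEq (β i)]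

lemma exists_eq_update_of_hammingDist_eq_one {x y : ∀ i, β i} (h : hammingDist x y = 1) :
    ∃ i, y i ≠ x i ∧ y = update x i (y i) := by
  obtain ⟨i, hi⟩ := card_eq_one.1 h
  have hdiff (i' : ι) : x i' ≠ y i' ↔ i' = i := by
    simpa using congrArg (i' ∈ ·) hi
  refine ⟨i, fun h => (hdiff i).2 rfl h.symm, funext fun i' => ?_⟩
  by_cases hi' : i' = i
  · subst hi'
    rw [update_self]
  · rw [update_of_ne hi']
    exact not_not.1 fun h => hi' ((hdiff i').1 (Ne.symm h))

lemma hammingDist_update_self {x : ∀ i, β i} {i : ι} {a : β i} (ha : a ≠ x i) :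
    hammingDist x (update x i a) = 1 := by
  refine card_eq_one.2 ⟨i, eq_singleton_iff_unique_mem.2 ⟨?_, fun i' hi' => ?_⟩⟩
  · simpa using ha.symm
  · by_contra h
    simp [update_of_ne h] at hi'

end Hamming

section Sensitivity

variable {p n : ℕ} [NeZero p] {g : (Fin n → ZMod p) → ZMod p} {x : Fin n → ZMod p}

lemma localSensU_le_card (S : Finset (Fin n × ZMod p))
    (hS : ∀ i a, a ≠ x i → g (update x i a) ≠ g x → (i, a) ∈ S) :
    localSensU p n g x ≤ #S := by
  refine (card_le_card fun y hy => ?_).trans (card_image_le (f := fun ia => update x ia.1 ia.2))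
  obtain ⟨-, hd, hgy⟩ := mem_filter.1 hy
  obtain ⟨i, hi, hy⟩ := exists_eq_update_of_hammingDist_eq_one hd
  rw [hy] at hgy
  exact mem_image.2 ⟨(i, y i), hS i _ hi hgy, hy.symm⟩

lemma card_le_localSensU (S : Finset (Fin n × ZMod p))
    (hS : ∀ ia ∈ S, ia.2 ≠ x ia.1 ∧ g (update x ia.1 ia.2) ≠ g x) :
    #S ≤ localSensU p n g x := by
  have hinj : Set.InjOn (fun ia : Fin n × ZMod p => update x ia.1 ia.2) S := by
    rintro ⟨i, a⟩ hia ⟨i', a'⟩ - h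
    have hi := congrFun h i
    by_cases hii : i = i'
    · subst hii
      simp_all
    · simp [update_of_ne hii] at hi
      exact absurd hi (hS _ hia).1
  rw [← card_image_of_injOn hinj]
  refine card_le_card fun y hy => ?_
  obtain ⟨⟨i, a⟩, hia, rfl⟩ := mem_image.1 hy
  exact mem_filter.2 ⟨mem_univ _, hammingDist_update_self (hS _ hia).1, (hS _ hia).2⟩

end Sensitivity

section SensitivityAndOfOrs

variable {p n : ℕ} [NeZero p] {κ : Type*} (B : κ → Finset (Fin n))

lemma localSensU_andOfOrs_le_card [Fintype κ] {x : Fin n → ZMod p} (hx : AllBlocksNonzero B x) :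
    localSensU p n (andOfOrs p B) x ≤ Fintype.card κ := by
  set lonely : κ → Finset (Fin n) := fun j =>
    (B j).filter fun i => x i ≠ 0 ∧ ∀ i' ∈ B j, i' ≠ i → x i' = 0
  have hlonely (j : κ) : #(lonely j) ≤ 1 := card_le_one.2 fun i hi i' hi' => by
    by_contra h
    exact (mem_filter.1 hi').2.1 ((mem_filter.1 hi).2.2 i' (mem_filter.1 hi').1 (Ne.symm h))
  refine (localSensU_le_card ((univ.biUnion lonely) ×ˢ {0}) fun i a _ hga => ?_).trans ?_
  · have hdead : ¬AllBlocksNonzero B (update x i a) := fun hy =>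
      hga (by rw [andOfOrs_of_allBlocksNonzero B hy, andOfOrs_of_allBlocksNonzero B hx])
    obtain ⟨j, hj⟩ : ∃ j, ∀ i' ∈ B j, update x i a i' = 0 := by
      simpa [AllBlocksNonzero] using hdead
    obtain ⟨i₀, hi₀, hxi₀⟩ := hx j
    have hi₀i : i₀ = i :=
      by_contra fun h => hxi₀ (by simpa [update_of_ne h] using hj i₀ hi₀)
    subst hi₀i
    have ha : a = 0 := by simpa using hj i₀ hi₀
    refine mem_product.2 ⟨mem_biUnion.2 ⟨j, mem_univ j, mem_filter.2 ⟨hi₀, hxi₀, ?_⟩⟩,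
      mem_singleton.2 ha⟩
    intro i' hi' hne
    simpa [update_of_ne hne] using hj i' hi'
  · rw [card_product, card_singleton, mul_one]
    exact card_biUnion_le.trans ((sum_le_sum fun j _ => hlonely j).trans (by simp))

lemma localSensU_andOfOrs_le_of_block_eq_zero {x : Fin n → ZMod p} {j : κ}
    (hx : ∀ i ∈ B j, x i = 0) :
    localSensU p n (andOfOrs p B) x ≤ #(B j) * (p - 1) := by
  have hdead : ¬AllBlocksNonzero B x := fun h => by
    obtain ⟨i, hi, hxi⟩ := h j
    exact hxi (hx i hi)
  refine (localSensU_le_card (B j ×ˢ univ.erase 0) fun i a _ hga => ?_).trans ?_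
  · have halive : AllBlocksNonzero B (update x i a) := by_contra fun hy =>
      hga (by rw [andOfOrs_of_not_allBlocksNonzero B hy, andOfOrs_of_not_allBlocksNonzero B hdead])
    obtain ⟨i', hi', hyi'⟩ := halive j
    have hi'i : i' = i := by_contra fun h => hyi' (by simpa [update_of_ne h] using hx i' hi')
    subst hi'i
    exact mem_product.2 ⟨hi', mem_erase.2 ⟨by simpa using hyi', mem_univ a⟩⟩
  · rw [card_product, card_erase_of_mem (mem_univ _), card_univ, ZMod.card]

theorem sensU_andOfOrs_le [Fintype κ] (hb : ∀ j, #(B j) * (p - 1) ≤ Fintype.card κ) :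
    sensU p n (andOfOrs p B) ≤ Fintype.card κ := by
  refine Finset.sup_le fun x _ => ?_
  by_cases hx : AllBlocksNonzero B x
  · exact localSensU_andOfOrs_le_card B hx
  · obtain ⟨j, hj⟩ : ∃ j, ∀ i ∈ B j, x i = 0 := by simpa [AllBlocksNonzero] using hx
    exact (localSensU_andOfOrs_le_of_block_eq_zero B hj).trans (hb j)

theorem card_le_sensU_andOfOrs [Fintype κ] (hp : 1 < p) (hdisj : Pairwise (Disjoint on B))
    (hne : ∀ j, (B j).Nonempty) :
    Fintype.card κ ≤ sensU p n (andOfOrs p B) := by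
  have : Fact (1 < p) := ⟨hp⟩
  choose r hr using hne
  have hr_unique {i : Fin n} {j j' : κ} (hi : i ∈ B j) (hij' : i = r j') : j' = j :=
    by_contra fun h => disjoint_left.1 (hdisj h) (hij' ▸ hr j') hi
  set x : Fin n → ZMod p := fun i => if i ∈ univ.image r then 1 else 0
  have hx : AllBlocksNonzero B x := fun j => ⟨r j, hr j, by simp [x]⟩
  have hS : #(univ.image fun j => (r j, (0 : ZMod p))) = Fintype.card κ :=
    card_image_of_injective _ fun j j' h => hr_unique (hr j') (congrArg Prod.fst h).symm
  refine hS.symm.le.trans ((card_le_localSensU _ fun ia hia => ?_).trans (le_sup (mem_univ x)))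
  obtain ⟨j, -, rfl⟩ := mem_image.1 hia
  refine ⟨by simp [x], fun h => ?_⟩
  have hdead : ¬AllBlocksNonzero B (update x (r j) 0) := fun hy => by
    obtain ⟨i, hi, hyi⟩ := hy j
    by_cases hij : i = r j
    · subst hij
      simp at hyi
    · refine hyi ?_
      simp only [update_of_ne hij, x, mem_image, mem_univ, true_and, ite_eq_right_iff]
      rintro ⟨j', rfl⟩
      exact (hij (by rw [hr_unique hi rfl])).elim
  rw [andOfOrs_of_not_allBlocksNonzero B hdead, andOfOrs_of_allBlocksNonzero B hx] at h
  exact zero_ne_one h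

theorem sensU_andOfOrs [Fintype κ] (hp : 1 < p) (hdisj : Pairwise (Disjoint on B))
    (hne : ∀ j, (B j).Nonempty) (hb : ∀ j, #(B j) * (p - 1) ≤ Fintype.card κ) :
    sensU p n (andOfOrs p B) = Fintype.card κ :=
  le_antisymm (sensU_andOfOrs_le B hb) (card_le_sensU_andOfOrs B hp hdisj hne)

end SensitivityAndOfOrs

section ConsecutiveBlocks

variable {k b n : ℕ} (h : k * b ≤ n)

def consecutiveBlocks (j : Fin k) : Finset (Fin n) :=
  ({j} ×ˢ univ : Finset (Fin k × Fin b)).map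
    (finProdFinEquiv.toEmbedding.trans (Fin.castLEEmb h))

lemma card_consecutiveBlocks (j : Fin k) : #(consecutiveBlocks h j) = b := by
  simp [consecutiveBlocks]

lemma pairwise_disjoint_consecutiveBlocks : Pairwise (Disjoint on consecutiveBlocks h) :=
  fun _ _ hjj' => (disjoint_map _).2 (disjoint_product.2 (Or.inl (disjoint_singleton.2 hjj')))

lemma consecutiveBlocks_nonempty (hb : 0 < b) (j : Fin k) : (consecutiveBlocks h j).Nonempty :=
  map_nonempty.2 (singleton_nonempty j |>.product ⟨⟨0, hb⟩, mem_univ _⟩)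

end ConsecutiveBlocks

theorem stmt16_general (p : ℕ) [NeZero p] (hp : p.Prime) (D : ℕ) :
    ∃ n0 : ℕ, ∀ n : ℕ, n0 ≤ n →
      ∃ g : (Fin n → ZMod p) → ZMod p,
        D < degU p n g ∧
        (sensU p n g : ℝ) = Real.sqrt (((p : ℝ) - 1) * (degU p n g : ℝ)) := by
  set b := D + 1
  set k := b * (p - 1) ^ 2
  have hp1 : 1 ≤ p - 1 := by have := hp.two_le; omega
  have hk : 0 < k := by positivity
  have : Nonempty (Fin k) := ⟨⟨0, hk⟩⟩
  refine ⟨k * b, fun n hn => ⟨andOfOrs p (consecutiveBlocks hn), ?_⟩⟩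
  have hdisj := pairwise_disjoint_consecutiveBlocks hn
  have hne := consecutiveBlocks_nonempty hn D.succ_pos
  have hdeg : degU p n (andOfOrs p (consecutiveBlocks hn)) = k * b * (p - 1) := by
    rw [degU_andOfOrs _ hp.one_lt hdisj hne]
    simp [card_consecutiveBlocks]
  have hsens : sensU p n (andOfOrs p (consecutiveBlocks hn)) = k := by
    rw [sensU_andOfOrs _ hp.one_lt hdisj hne fun j => ?_, Fintype.card_fin]
    rw [card_consecutiveBlocks, Fintype.card_fin]
    exact Nat.mul_le_mul_left b (Nat.le_self_pow two_ne_zero _)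
  rw [hdeg, hsens]
  refine ⟨D.lt_succ_self.trans_le ((Nat.le_mul_of_pos_left b hk).trans
    (Nat.le_mul_of_pos_right _ hp1)), ?_⟩
  have hk2 : ((p : ℝ) - 1) * ((k * b * (p - 1) : ℕ) : ℝ) = (k : ℝ) ^ 2 := by
    simp only [k, b]
    push_cast [Nat.cast_sub hp.one_le]
    ring
  rw [hk2, Real.sqrt_sq (Nat.cast_nonneg _)]

theorem stmt16 (p : ℕ) [NeZero p] (hp : p.Prime) (D : ℕ) (hD : 0 < D) :
    ∃ n0 : ℕ, ∀ n : ℕ, n0 ≤ n →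
      ∃ g : (Fin n → ZMod p) → ZMod p,
        D < degU p n g ∧
        (sensU p n g : ℝ) = Real.sqrt (((p : ℝ) - 1) * (degU p n g : ℝ)) :=
  stmt16_general p hp D
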